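/- arXiv:2007.09166 — 4 statements merged into one kernel-verified Lean document; each statement's English description precedes it below -/
import Mathlib

section
/- (A priori bound, Lemma 3.1.) Let f : Vᵐ → V be continuous and satisfy condition (A3) with constant R > 0. If x : ℝ → V is a twice continuously differentiable 2π-periodic function with sup_{t∈ℝ} |x(t)| > R, then for every λ ∈ [0,1], x is not a solution of the equation ẍ(t) = λ(f(x_t) − x(t)) + x(t); that is, there exists t ∈ ℝ such that ẍ(t) ≠ λ(f(x_t) − x(t)) + x(t). -/
open Real Function RealInnerProductSpace

/-! At a time `T` where the `2π`-periodic function `‖x‖` attains its maximum, (A3) applies to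
`x_T` and makes `⟪x T, ẍ T⟫ = λ ⟪x T, f x_T⟫ + (1 - λ) ‖x T‖²` positive. But `‖x‖²` has a local
maximum at `T`, so its second derivative `2 (⟪x T, ẍ T⟫ + ‖ẋ T‖²)` is nonpositive. -/

theorem Function.Periodic.exists_forall_ge_of_continuous {α : Type*} [TopologicalSpace α]
    [ConditionallyCompleteLinearOrder α] [OrderTopology α] {f : ℝ → α} {c : ℝ}
    (hp : Periodic f c) (hc : c ≠ 0) (hf : Continuous f) : ∃ T, ∀ t, f t ≤ f T := by
  obtain ⟨_, ⟨T, rfl⟩, hT⟩ :=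
    (hp.compact_of_continuous hc hf).exists_isGreatest (Set.range_nonempty f)
  exact ⟨T, fun t => hT ⟨t, rfl⟩⟩

/-- If `f'' a > 0`, the second derivative test makes `a` also a local minimum, so `f` is locally
constant near `a` and `f'' a = 0`. -/
theorem IsLocalMax.deriv_deriv_nonpos {f : ℝ → ℝ} {a : ℝ} (h : IsLocalMax f a)
    (hc : ContinuousAt f a) : deriv (deriv f) a ≤ 0 := by
  by_contra! hpos
  have hmin : IsLocalMin f a := isLocalMin_of_deriv_deriv_pos hpos h.deriv_eq_zero hc
  have hconst : f =ᶠ[nhds a] fun _ => f a :=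
    (h.and hmin).mono fun _ hx => le_antisymm hx.1 hx.2
  have hderiv : deriv f =ᶠ[nhds a] fun _ => 0 :=
    hconst.eventuallyEq_nhds.mono fun _ hx => by rw [hx.deriv_eq, deriv_const]
  rw [hderiv.deriv_eq, deriv_const] at hpos
  exact hpos.false

theorem real_inner_deriv_deriv_nonpos_of_isLocalMax_norm {E : Type*} [NormedAddCommGroup E]
    [InnerProductSpace ℝ E] {x : ℝ → E} {T : ℝ} (hx : Differentiable ℝ x)
    (hx' : DifferentiableAt ℝ (deriv x) T) (hmax : IsLocalMax (fun t => ‖x t‖) T) :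
    ⟪x T, deriv (deriv x) T⟫ ≤ 0 := by
  have hmax_sq : IsLocalMax (fun t => ‖x t‖ ^ 2) T :=
    hmax.mono fun _ ht => pow_le_pow_left₀ (norm_nonneg _) ht 2
  have hderiv : deriv (fun t => ‖x t‖ ^ 2) = fun t => 2 * ⟪x t, deriv x t⟫ :=
    funext fun t => (hx t).hasDerivAt.norm_sq.deriv
  have hsecond : deriv (deriv (fun t => ‖x t‖ ^ 2)) T
      = 2 * (⟪x T, deriv (deriv x) T⟫ + ⟪deriv x T, deriv x T⟫) := by
    rw [hderiv]
    exact (((hx T).hasDerivAt.inner ℝ hx'.hasDerivAt).const_mul 2).deriv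
  have hnonpos := hmax_sq.deriv_deriv_nonpos ((hx T).continuousAt.norm.pow 2)
  rw [hsecond] at hnonpos
  nlinarith [real_inner_self_nonneg (x := deriv x T)]

theorem real_inner_smul_sub_add_pos {E : Type*} [NormedAddCommGroup E] [InnerProductSpace ℝ E]
    {u w : E} (h : 0 < ⟪u, w⟫) {lam : ℝ} (hlam : lam ∈ Set.Icc (0 : ℝ) 1) :
    0 < ⟪u, lam • (w - u) + u⟫ := by
  have hu : 0 < ⟪u, u⟫ := real_inner_self_pos.mpr fun hu => by simp [hu] at h
  rw [inner_add_right, real_inner_smul_right, inner_sub_right]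
  nlinarith [mul_pos h hu, mul_nonneg hlam.1 h.le, mul_nonneg (sub_nonneg.2 hlam.2) hu.le]

theorem stmt1_general (n m : ℕ) [NeZero m]
    (f : (Fin m → EuclideanSpace ℝ (Fin n)) → EuclideanSpace ℝ (Fin n))
    (R : ℝ)
    (hA3 : ∀ v : Fin m → EuclideanSpace ℝ (Fin n),
      R < ‖v 0‖ → (∀ j : Fin m, ‖v j‖ ≤ ‖v 0‖) → 0 < ⟪v 0, f v⟫)
    (x : ℝ → EuclideanSpace ℝ (Fin n)) (hx : ContDiff ℝ 2 x)
    (hper : Periodic x (2 * π)) (hsup : ∃ t₀ : ℝ, R < ‖x t₀‖)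
    (lam : ℝ) (hlam : lam ∈ Set.Icc (0 : ℝ) 1) :
    ∃ t : ℝ, deriv (deriv x) t ≠
      lam • (f (fun j : Fin m => x (t - j.1 * (2 * π / m))) - x t) + x t := by
  by_contra! hsol
  obtain ⟨hx₁, -, hx₂⟩ := contDiff_succ_iff_deriv.mp (show ContDiff ℝ (1 + 1) x from hx)
  obtain ⟨T, hT⟩ := (hper.comp (‖·‖)).exists_forall_ge_of_continuous (by positivity)
    (continuous_norm.comp hx₁.continuous)
  obtain ⟨t₀, ht₀⟩ := hsup
  have hA : 0 < ⟪x T, f fun j : Fin m => x (T - j.1 * (2 * π / m))⟫ := by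
    simpa using hA3 (fun j : Fin m => x (T - j.1 * (2 * π / m)))
      (by simpa using ht₀.trans_le (hT t₀)) (fun j => by simpa using hT _)
  have hpos : 0 < ⟪x T, deriv (deriv x) T⟫ := hsol T ▸ real_inner_smul_sub_add_pos hA hlam
  have hnonpos := real_inner_deriv_deriv_nonpos_of_isLocalMax_norm hx₁
    (hx₂.differentiable one_ne_zero T) (Filter.Eventually.of_forall hT)
  exact hpos.not_ge hnonpos

/-- A priori bound, Lemma 3.1: if `f` satisfies (A3) with constant
`R > 0` and `x` is a `C²` `2π`-periodic function whose sup-norm exceeds `R`, then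
for every `λ ∈ [0,1]`, `x` does not solve `ẍ(t) = λ(f(x_t) − x(t)) + x(t)`. -/
theorem stmt1 (n m : ℕ) (hn : 0 < n) (hm : 0 < m) [NeZero m]
    (f : (Fin m → EuclideanSpace ℝ (Fin n)) → EuclideanSpace ℝ (Fin n))
    (hf : Continuous f) (R : ℝ) (hR : 0 < R)
    (hA3 : ∀ v : Fin m → EuclideanSpace ℝ (Fin n),
      R < ‖v 0‖ → (∀ j : Fin m, ‖v j‖ ≤ ‖v 0‖) → 0 < ⟪v 0, f v⟫)
    (x : ℝ → EuclideanSpace ℝ (Fin n)) (hx : ContDiff ℝ 2 x)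
    (hper : Periodic x (2 * π)) (hsup : ∃ t₀ : ℝ, R < ‖x t₀‖)
    (lam : ℝ) (hlam : lam ∈ Set.Icc (0 : ℝ) 1) :
    ∃ t : ℝ, deriv (deriv x) t ≠
      lam • (f (fun j : Fin m => x (t - j.1 * (2 * π / m))) - x t) + x t :=
  stmt1_general n m f R hA3 x hx hper hsup lam hlam
end

section
/- (Uniform a priori bounds, Lemma 3.2.) Let f : Vᵐ → V be continuous and satisfy condition (A3). Then there exists a constant M > 0 such that for every λ ∈ [0,1] and every twice continuously differentiable 2π-periodic solution x : ℝ → V of ẍ(t) = λ(f(x_t) − x(t)) + x(t), one has |x(t)| < M, |ẋ(t)| < M, and |ẍ(t)| < M for all t ∈ ℝ. -/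
open Real Function RealInnerProductSpace

section InnerProductSpace

variable {E : Type*} [NormedAddCommGroup E] [InnerProductSpace ℝ E]

theorem IsLocalMax.inner_deriv_deriv_nonpos {x : ℝ → E} {t₀ : ℝ}
    (hmax : IsLocalMax (fun t => ‖x t‖) t₀) (hx : Differentiable ℝ x)
    (hx' : DifferentiableAt ℝ (deriv x) t₀) : ⟪x t₀, deriv (deriv x) t₀⟫ ≤ 0 := by
  set h : ℝ → ℝ := fun t => ⟪x t₀, x t⟫
  have hh : IsLocalMax h t₀ := hmax.mono fun t ht => calc
    h t ≤ ‖x t₀‖ * ‖x t‖ := real_inner_le_norm _ _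
    _ ≤ ‖x t₀‖ * ‖x t₀‖ := by gcongr
    _ = h t₀ := (real_inner_self_eq_norm_mul_norm _).symm
  have hderiv : deriv h = fun t => ⟪x t₀, deriv x t⟫ := funext fun t =>
    (((hasDerivAt_const t (x t₀)).inner ℝ (hx t).hasDerivAt).deriv).trans (by simp)
  have hderiv2 : deriv (deriv h) t₀ = ⟪x t₀, deriv (deriv x) t₀⟫ := by
    rw [hderiv]
    exact (((hasDerivAt_const t₀ (x t₀)).inner ℝ hx'.hasDerivAt).deriv).trans (by simp)
  rw [← hderiv2]
  exact hh.deriv_deriv_nonpos (continuous_const.inner hx.continuous).continuousAt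

theorem Function.Periodic.exists_forall_le {α : Type*} [LinearOrder α] [TopologicalSpace α]
    [ClosedIciTopology α] {f : ℝ → α} {c : ℝ} (hp : Periodic f c) (hc : c ≠ 0)
    (hf : Continuous f) : ∃ t₀, ∀ t, f t ≤ f t₀ := by
  obtain ⟨_, ⟨t₀, rfl⟩, hmax⟩ :=
    (hp.compact_of_continuous hc hf).exists_isGreatest (Set.range_nonempty f)
  exact ⟨t₀, fun t => hmax ⟨t, rfl⟩⟩

theorem Function.Periodic.norm_le_of_inner_deriv_deriv_pos {x : ℝ → E} {T R : ℝ}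
    (hper : Periodic x T) (hT : T ≠ 0) (hx : Differentiable ℝ x)
    (hx' : Differentiable ℝ (deriv x))
    (hpos : ∀ t, R < ‖x t‖ → (∀ s, ‖x s‖ ≤ ‖x t‖) → 0 < ⟪x t, deriv (deriv x) t⟫) (t : ℝ) :
    ‖x t‖ ≤ R := by
  obtain ⟨t₀, hmax⟩ := (hper.comp norm).exists_forall_le hT hx.continuous.norm
  refine (hmax t).trans (not_lt.1 fun hR => ?_)
  exact (hpos t₀ hR hmax).not_ge
    (IsLocalMax.inner_deriv_deriv_nonpos (Filter.Eventually.of_forall hmax) hx (hx' t₀))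

theorem Function.Periodic.norm_deriv_le [CompleteSpace E] {x : ℝ → E} {T B : ℝ}
    (hper : Periodic x T) (hT : 0 < T) (hx : Differentiable ℝ x) (hx' : Differentiable ℝ (deriv x))
    (hB : ∀ t, ‖deriv (deriv x) t‖ ≤ B) (t : ℝ) : ‖deriv x t‖ ≤ T * B := by
  have hint : IntervalIntegrable (deriv x) MeasureTheory.volume t (t + T) :=
    hx'.continuous.intervalIntegrable _ _
  have hmean : T • deriv x t = ∫ s in t..(t + T), (deriv x t - deriv x s) := by
    rw [intervalIntegral.integral_sub intervalIntegrable_const hint,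
      intervalIntegral.integral_deriv_eq_sub (fun s _ => hx s) hint, hper t,
      intervalIntegral.integral_const, add_sub_cancel_left, sub_self, sub_zero]
  have hlip : ∀ s ∈ Set.uIoc t (t + T), ‖deriv x t - deriv x s‖ ≤ B * T := by
    intro s hs
    rw [Set.uIoc_of_le (by linarith)] at hs
    calc ‖deriv x t - deriv x s‖ ≤ B * ‖t - s‖ :=
          Convex.norm_image_sub_le_of_norm_deriv_le (fun u _ => hx' u) (fun u _ => hB u)
            convex_univ trivial trivial
      _ ≤ B * T := by
          have := (norm_nonneg _).trans (hB t)
          gcongr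
          rw [Real.norm_eq_abs, abs_sub_comm, abs_of_pos (by linarith [hs.1])]
          linarith [hs.2]
  have hbound := intervalIntegral.norm_integral_le_of_norm_le_const hlip
  rw [← hmean, norm_smul, Real.norm_of_nonneg hT.le, add_sub_cancel_left,
    abs_of_pos hT] at hbound
  nlinarith

theorem real_inner_smul_sub_add_pos_s2 {u w : E} {c : ℝ} (hc : c ∈ Set.Icc (0 : ℝ) 1)
    (hu : u ≠ 0) (huw : 0 < ⟪u, w⟫) : 0 < ⟪u, c • (w - u) + u⟫ := by
  have hexp : ⟪u, c • (w - u) + u⟫ = c * ⟪u, w⟫ + (1 - c) * ‖u‖ ^ 2 := by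
    rw [inner_add_right, real_inner_smul_right, inner_sub_right, real_inner_self_eq_norm_sq]
    ring
  rw [hexp]
  obtain ⟨hc0, hc1⟩ := hc
  rcases hc0.eq_or_lt with rfl | hc0
  · simpa using pow_pos (norm_pos_iff.2 hu) 2
  · exact add_pos_of_pos_of_nonneg (mul_pos hc0 huw)
      (mul_nonneg (sub_nonneg.2 hc1) (sq_nonneg _))

theorem norm_smul_sub_add_le_max {u w : E} {c : ℝ} (hc : c ∈ Set.Icc (0 : ℝ) 1) :
    ‖c • (w - u) + u‖ ≤ max ‖w‖ ‖u‖ := by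
  have hmem := convex_closedBall (0 : E) (max ‖w‖ ‖u‖)
    (mem_closedBall_zero_iff.2 (le_max_left ‖w‖ ‖u‖))
    (mem_closedBall_zero_iff.2 (le_max_right ‖w‖ ‖u‖)) hc.1 (sub_nonneg.2 hc.2)
    (add_sub_cancel c 1)
  have hcombo : c • (w - u) + u = c • w + (1 - c) • u := by
    rw [smul_sub, sub_smul, one_smul]
    abel
  rwa [hcombo, ← mem_closedBall_zero_iff]

end InnerProductSpace

theorem stmt2_general (n m : ℕ) [NeZero m]
    (f : (Fin m → EuclideanSpace ℝ (Fin n)) → EuclideanSpace ℝ (Fin n))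
    (hf : Continuous f)
    (hA3 : ∃ R > (0 : ℝ), ∀ v : Fin m → EuclideanSpace ℝ (Fin n),
      R < ‖v 0‖ → (∀ j : Fin m, ‖v j‖ ≤ ‖v 0‖) → 0 < ⟪v 0, f v⟫) :
    ∃ M > (0 : ℝ), ∀ lam ∈ Set.Icc (0 : ℝ) 1,
      ∀ x : ℝ → EuclideanSpace ℝ (Fin n), ContDiff ℝ 2 x → Periodic x (2 * π) →
        (∀ t : ℝ, deriv (deriv x) t =
          lam • (f (fun j : Fin m => x (t - j.1 * (2 * π / m))) - x t) + x t) →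
        ∀ t : ℝ, ‖x t‖ < M ∧ ‖deriv x t‖ < M ∧ ‖deriv (deriv x) t‖ < M := by
  obtain ⟨R, hR, hA3⟩ := hA3
  -- `Fin m → E` carries the sup norm, so this ball is exactly the set of delay vectors
  -- with entries in the closed `R`-ball
  obtain ⟨C, hC⟩ := IsCompact.exists_bound_of_continuousOn
    (isCompact_closedBall (0 : Fin m → EuclideanSpace ℝ (Fin n)) R) hf.continuousOn
  set B := max C R
  have hRB : R ≤ B := le_max_right C R
  have hπB : 0 < 2 * π * B := by positivity [hR.trans_le hRB]
  refine ⟨2 * π * B + B + 1, by linarith, fun lam hlam x hx hper heq => ?_⟩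
  have hx₁ : Differentiable ℝ x := hx.differentiable (by norm_num)
  have hx₂ : Differentiable ℝ (deriv x) := (hx.iterate_deriv' 1 1).differentiable one_ne_zero
  have hxR : ∀ t, ‖x t‖ ≤ R :=
    hper.norm_le_of_inner_deriv_deriv_pos two_pi_pos.ne' hx₁ hx₂ fun t hRt hmax => by
      have hv₀ : x (t - (0 : Fin m).1 * (2 * π / m)) = x t := by simp
      have hf_pos := hA3 (fun j : Fin m => x (t - j.1 * (2 * π / m)))
        (by rwa [hv₀]) fun j => by rw [hv₀]; exact hmax _
      rw [hv₀] at hf_pos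
      rw [heq t]
      exact real_inner_smul_sub_add_pos_s2 hlam (norm_pos_iff.1 (hR.trans hRt)) hf_pos
  have hx''B : ∀ t, ‖deriv (deriv x) t‖ ≤ B := fun t => by
    have hdelay : ‖fun j : Fin m => x (t - j.1 * (2 * π / m))‖ ≤ R :=
      (pi_norm_le_iff_of_nonneg hR.le).2 fun j => hxR _
    rw [heq t]
    exact (norm_smul_sub_add_le_max hlam).trans
      (max_le_max (hC _ (mem_closedBall_zero_iff.2 hdelay)) (hxR t))
  have hx'B := hper.norm_deriv_le two_pi_pos hx₁ hx₂ hx''B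
  exact fun t => ⟨by linarith [hxR t], by linarith [hx'B t], by linarith [hx''B t]⟩

/-- Uniform a priori bounds, Lemma 3.2: if `f` is continuous and
satisfies (A3), then there is `M > 0` bounding (strictly) `x`, `ẋ`, `ẍ` uniformly
for every `λ ∈ [0,1]` and every `C²` `2π`-periodic solution of
`ẍ(t) = λ(f(x_t) − x(t)) + x(t)`. -/
theorem stmt2 (n m : ℕ) (hn : 0 < n) (hm : 0 < m) [NeZero m]
    (f : (Fin m → EuclideanSpace ℝ (Fin n)) → EuclideanSpace ℝ (Fin n))
    (hf : Continuous f)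
    (hA3 : ∃ R > (0 : ℝ), ∀ v : Fin m → EuclideanSpace ℝ (Fin n),
      R < ‖v 0‖ → (∀ j : Fin m, ‖v j‖ ≤ ‖v 0‖) → 0 < ⟪v 0, f v⟫) :
    ∃ M > (0 : ℝ), ∀ lam ∈ Set.Icc (0 : ℝ) 1,
      ∀ x : ℝ → EuclideanSpace ℝ (Fin n), ContDiff ℝ 2 x → Periodic x (2 * π) →
        (∀ t : ℝ, deriv (deriv x) t =
          lam • (f (fun j : Fin m => x (t - j.1 * (2 * π / m))) - x t) + x t) →
        ∀ t : ℝ, ‖x t‖ < M ∧ ‖deriv x t‖ < M ∧ ‖deriv (deriv x) t‖ < M :=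
  stmt2_general n m f hf hA3
end

section
/- (Local admissibility of the linearization homotopy, analytic core of Lemma 3.3.) Let E be a real Banach space, let C : E → E be a compact linear operator (C is bounded and maps bounded sets to relatively compact sets), and suppose that A := id − C is injective. Let K : E → E be a continuous map with K(0) = 0 that is Fréchet differentiable at 0 with derivative C, and set 𝓕 := id − K. Then there exists ε > 0 such that for every t ∈ [0,1] and every x ∈ E with 0 < ‖x‖ ≤ ε, one has (1−t)·A(x) + t·𝓕(x) ≠ 0. -/
/-!
Since `C` is compact and `id - C` is injective, `1` is not an eigenvalue of `C`, so by the
Fredholm alternative `id - C` is bounded below: `c * ‖x‖ ≤ ‖x - C x‖`. The homotopy rewrites as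
`(x - C x) + t • (C x - K x)`, and by differentiability `‖C x - K x‖ = o(‖x‖)` near `0`,
so the perturbation is too small to cancel `x - C x` for small `x ≠ 0`.
-/

open Filter Topology

namespace IsCompactOperator

variable {𝕜 E : Type*} [NontriviallyNormedField 𝕜] [NormedAddCommGroup E] [NormedSpace 𝕜 E]

theorem exists_pos_mul_norm_le_norm_sub_apply {C : E →L[𝕜] E} (hC : IsCompactOperator C)
    (hinj : Function.Injective fun x : E => x - C x) :
    ∃ c > 0, ∀ x : E, c * ‖x‖ ≤ ‖x - C x‖ := by
  have hone : ¬ Module.End.HasEigenvalue (C : Module.End 𝕜 E) 1 := fun h => by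
    obtain ⟨x, hx⟩ := h.exists_hasEigenvector
    have hfix : C x = x := by simpa using hx.apply_eq_smul
    exact hx.2 (hinj (by simp [hfix]))
  obtain ⟨c, hc, hbound⟩ := antilipschitzWith_iff_exists_mul_le_norm.1
    (hC.antilipschitz_of_not_hasEigenvalue one_ne_zero hone)
  exact ⟨c, hc, fun x => by simpa [norm_sub_rev] using hbound x⟩

end IsCompactOperator

theorem add_smul_ne_zero_of_norm_lt {𝕜 E : Type*} [NormedField 𝕜] [SeminormedAddCommGroup E]
    [NormedSpace 𝕜 E] {a r : E} {t : 𝕜} (ht : ‖t‖ ≤ 1) (hr : ‖r‖ < ‖a‖) : a + t • r ≠ 0 := by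
  intro h
  have : ‖a‖ ≤ ‖r‖ := calc
    ‖a‖ = ‖t • r‖ := by rw [eq_neg_of_add_eq_zero_left h, norm_neg]
    _ ≤ ‖r‖ := by rw [norm_smul]; exact mul_le_of_le_one_left (norm_nonneg _) ht
  exact this.not_gt hr

theorem stmt7_general (E : Type*) [NormedAddCommGroup E] [NormedSpace ℝ E]
    (C : E →L[ℝ] E)
    (hcomp : ∀ s : Set E, Bornology.IsBounded s → IsCompact (closure (C '' s)))
    (hinj : Function.Injective fun x : E => x - C x)
    (K : E → E) (hK0 : K 0 = 0)
    (hKd : HasFDerivAt K C 0) :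
    ∃ ε > (0 : ℝ), ∀ t ∈ Set.Icc (0 : ℝ) 1, ∀ x : E,
      0 < ‖x‖ → ‖x‖ ≤ ε → (1 - t) • (x - C x) + t • (x - K x) ≠ 0 := by
  have hC : IsCompactOperator C :=
    (isCompactOperator_iff_isCompact_closure_image_closedBall (C : E →ₗ[ℝ] E) one_pos).2
      (hcomp _ Metric.isBounded_closedBall)
  obtain ⟨c, hc, hA⟩ := hC.exists_pos_mul_norm_le_norm_sub_apply hinj
  have hrem : (fun x => K x - C x) =o[𝓝 0] fun x => x := by
    simpa [hK0] using hKd.isLittleO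
  obtain ⟨ε, hε, hsmall⟩ :=
    Metric.nhds_basis_closedBall.eventually_iff.1 (hrem.def (half_pos hc))
  refine ⟨ε, hε, fun t ht x hx hxε => ?_⟩
  rw [show (1 - t) • (x - C x) + t • (x - K x) = (x - C x) + t • (C x - K x) by module]
  refine add_smul_ne_zero_of_norm_lt (by rw [Real.norm_of_nonneg ht.1]; exact ht.2) ?_
  calc ‖C x - K x‖ = ‖K x - C x‖ := norm_sub_rev _ _
    _ ≤ c / 2 * ‖x‖ := hsmall (by simpa using hxε)
    _ < c * ‖x‖ := by linarith [mul_pos hc hx]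
    _ ≤ ‖x - C x‖ := hA x

/-- Local admissibility of the linearization homotopy, analytic core
of Lemma 3.3: let `E` be a real Banach space, `C : E → E` a compact bounded
linear operator, `A := id − C` injective, and `K : E → E` continuous with
`K 0 = 0` and Fréchet differentiable at `0` with derivative `C`; set
`𝓕 := id − K`. Then there is `ε > 0` such that for all `t ∈ [0,1]` and all `x`
with `0 < ‖x‖ ≤ ε` one has `(1−t)·A(x) + t·𝓕(x) ≠ 0`. -/
theorem stmt7 (E : Type*) [NormedAddCommGroup E] [NormedSpace ℝ E]
    [CompleteSpace E]
    (C : E →L[ℝ] E)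
    (hcomp : ∀ s : Set E, Bornology.IsBounded s → IsCompact (closure (C '' s)))
    (hinj : Function.Injective fun x : E => x - C x)
    (K : E → E) (hKcont : Continuous K) (hK0 : K 0 = 0)
    (hKd : HasFDerivAt K C 0) :
    ∃ ε > (0 : ℝ), ∀ t ∈ Set.Icc (0 : ℝ) 1, ∀ x : E,
      0 < ‖x‖ → ‖x‖ ≤ ε → (1 - t) • (x - C x) + t • (x - K x) ≠ 0 :=
  stmt7_general E C hcomp hinj K hK0 hKd
end

section
/- (Growth condition (A3) for the polynomial class of Section 5.2(a).) Let n, m ≥ 1, V = ℝⁿ with the max norm |x| := max_s |x_s|, let r ≥ 5 and t be odd integers with 3 ≤ t < r, and let q₀ > 0. For s = 1, …, n let Q_s : V × V^{m−1} → ℝ be continuous with Q_s(x, 𝐲) ≥ q₀ for all (x, 𝐲), and let q_s : V × V^{m−1} → ℝ be continuous and positively homogeneous of degree t (q_s(c·u) = cᵗ·q_s(u) for all c > 0 and all u ∈ V × V^{m−1}). Let A₀, …, A_{m−1} be real n×n matrices and define f : V × V^{m−1} → V componentwise by f_s(x, 𝐲) := (A₀x + Σ_{j=1}^{m−1} A_j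 yʲ)_s + x_sʳ·Q_s(x, 𝐲) + q_s(x, 𝐲). Then there exists R > 0 such that for all (x, y¹, …, y^{m−1}) ∈ Vᵐ with |x| > R and |yʲ| ≤ |x| for j = 1, …, m−1, one has x • f(x, y¹, …, y^{m−1}) > 0, where • is the Euclidean inner product. -/
/-!
Under `|yʲ| ≤ |x|` the point `(x, 𝐲)` has norm `|x|`. The linear part and `q` are continuous
and positively homogeneous of degrees `1` and `t`, so at that point they are at most a constant
times `|x|` and `|x|ᵗ`; their contributions to `x • f` are therefore `O(|x|²)` and `O(|x|ᵗ⁺¹)`.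
Since `r + 1` is even and some coordinate attains `|x|`, the term `∑ x_sʳ⁺¹ Q_s` is at least
`q₀ |x|ʳ⁺¹`, and this dominates because `r + 1 > max 2 (t + 1)`.
-/

open Real Function Finset

theorem exists_norm_le_mul_norm_pow_of_homogeneous {E F : Type*} [NormedAddCommGroup E]
    [NormedSpace ℝ E] [ProperSpace E] [SeminormedAddCommGroup F] [NormedSpace ℝ F]
    {g : E → F} (hg : Continuous g) {p : ℕ}
    (hhom : ∀ c : ℝ, 0 < c → ∀ u, g (c • u) = c ^ p • g u) :
    ∃ M, ∀ u, u ≠ 0 → ‖g u‖ ≤ M * ‖u‖ ^ p := by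
  obtain ⟨M, hM⟩ :=
    (isCompact_sphere (0 : E) 1).exists_bound_of_continuousOn hg.continuousOn
  refine ⟨M, fun u hu => ?_⟩
  have hu : 0 < ‖u‖ := norm_pos_iff.mpr hu
  have hunit : ‖u‖⁻¹ • u ∈ Metric.sphere (0 : E) 1 := by
    simp [norm_smul, hu.ne']
  calc ‖g u‖ = ‖g (‖u‖ • ‖u‖⁻¹ • u)‖ := by rw [smul_inv_smul₀ hu.ne']
    _ = ‖u‖ ^ p * ‖g (‖u‖⁻¹ • u)‖ := by
      rw [hhom _ hu, norm_smul, norm_pow, norm_norm]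
    _ ≤ ‖u‖ ^ p * M := by gcongr; exact hM _ hunit
    _ = M * ‖u‖ ^ p := mul_comm _ _

section SupNorm

variable {ι : Type*} [Fintype ι]

theorem abs_sum_mul_le_of_norm_le {x v : ι → ℝ} {M : ℝ} {p : ℕ} (hv : ‖v‖ ≤ M * ‖x‖ ^ p) :
    |∑ i, x i * v i| ≤ Fintype.card ι * M * ‖x‖ ^ (p + 1) :=
  calc |∑ i, x i * v i| ≤ ∑ i, |x i * v i| := abs_sum_le_sum_abs _ _
    _ ≤ ∑ _i : ι, ‖x‖ * (M * ‖x‖ ^ p) := by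
      gcongr with i
      rw [abs_mul]
      exact mul_le_mul (norm_le_pi_norm x i) ((norm_le_pi_norm v i).trans hv) (abs_nonneg _)
        (norm_nonneg _)
    _ = Fintype.card ι * M * ‖x‖ ^ (p + 1) := by rw [sum_const, card_univ, nsmul_eq_mul]; ring

theorem mul_norm_pow_le_sum_pow_mul [Nonempty ι] {k : ℕ} (hk : Even k) {c : ℝ} (hc : 0 ≤ c)
    (x Q : ι → ℝ) (hQ : ∀ i, c ≤ Q i) : c * ‖x‖ ^ k ≤ ∑ i, x i ^ k * Q i := by
  obtain ⟨i₀, hi₀⟩ := Finite.exists_max fun i => |x i|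
  have hnorm : ‖x‖ = |x i₀| :=
    le_antisymm ((pi_norm_le_iff_of_nonneg (abs_nonneg _)).mpr hi₀) (norm_le_pi_norm x i₀)
  have hterm : ∀ i, 0 ≤ x i ^ k * Q i := fun i =>
    mul_nonneg (hk.pow_nonneg _) (hc.trans (hQ i))
  calc c * ‖x‖ ^ k = c * x i₀ ^ k := by rw [hnorm, hk.pow_abs]
    _ ≤ x i₀ ^ k * Q i₀ := by
      rw [mul_comm]; exact mul_le_mul_of_nonneg_left (hQ i₀) (hk.pow_nonneg _)
    _ ≤ ∑ i, x i ^ k * Q i := single_le_sum (fun i _ => hterm i) (mem_univ i₀)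

end SupNorm

theorem exists_forall_add_lt_mul_pow (a b : ℝ) {c : ℝ} (hc : 0 < c) {p₁ p₂ k : ℕ}
    (h₁ : p₁ < k) (h₂ : p₂ < k) :
    ∃ R > 0, ∀ s, R < s → a * s ^ p₁ + b * s ^ p₂ < c * s ^ k := by
  refine ⟨max 1 ((|a| + |b|) / c), by positivity, fun s hs => ?_⟩
  have hs1 : 1 < s := (le_max_left _ _).trans_lt hs
  have hab : |a| + |b| < c * s := by
    rw [← div_lt_iff₀' hc]; exact (le_max_right _ _).trans_lt hs
  have hterm : ∀ (d : ℝ) (p : ℕ), p < k → d * s ^ p ≤ |d| * s ^ (k - 1) := fun d p hp =>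
    calc d * s ^ p ≤ |d| * s ^ p := by gcongr; exact le_abs_self d
      _ ≤ |d| * s ^ (k - 1) := by gcongr; exacts [hs1.le, by omega]
  calc a * s ^ p₁ + b * s ^ p₂ ≤ (|a| + |b|) * s ^ (k - 1) := by
        rw [add_mul]; exact add_le_add (hterm a p₁ h₁) (hterm b p₂ h₂)
    _ < c * s * s ^ (k - 1) := by gcongr
    _ = c * s ^ k := by rw [mul_assoc, ← pow_succ', Nat.sub_add_cancel (by omega)]

theorem stmt11_general (n m : ℕ) (hn : 0 < n)
    (r t : ℕ) (hr5 : 5 ≤ r) (hrodd : Odd r) (htr : t < r)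
    (q0 : ℝ) (hq0 : 0 < q0)
    (Q q : Fin n → ((Fin n → ℝ) × (Fin (m - 1) → Fin n → ℝ)) → ℝ)
    (hQpos : ∀ (s : Fin n) (u : (Fin n → ℝ) × (Fin (m - 1) → Fin n → ℝ)),
      q0 ≤ Q s u)
    (hqcont : ∀ s : Fin n, Continuous (q s))
    (hqhom : ∀ (s : Fin n) (c : ℝ), 0 < c →
      ∀ u : (Fin n → ℝ) × (Fin (m - 1) → Fin n → ℝ),
        q s (c • u) = c ^ t * q s u)
    (A0 : Matrix (Fin n) (Fin n) ℝ) (A : Fin (m - 1) → Matrix (Fin n) (Fin n) ℝ)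
    (f : (Fin n → ℝ) → (Fin (m - 1) → Fin n → ℝ) → (Fin n → ℝ))
    (hf : ∀ (x : Fin n → ℝ) (y : Fin (m - 1) → Fin n → ℝ) (s : Fin n),
      f x y s = (A0.mulVec x + ∑ j : Fin (m - 1), (A j).mulVec (y j)) s
        + (x s) ^ r * Q s (x, y) + q s (x, y)) :
    ∃ R > (0 : ℝ), ∀ (x : Fin n → ℝ) (y : Fin (m - 1) → Fin n → ℝ),
      R < ‖x‖ → (∀ j : Fin (m - 1), ‖y j‖ ≤ ‖x‖) →
      0 < ∑ i : Fin n, x i * f x y i := by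
  have : Nonempty (Fin n) := ⟨⟨0, hn⟩⟩
  let L := fun u : (Fin n → ℝ) × (Fin (m - 1) → Fin n → ℝ) =>
    A0.mulVec u.1 + ∑ j, (A j).mulVec (u.2 j)
  obtain ⟨ML, hML⟩ := exists_norm_le_mul_norm_pow_of_homogeneous (g := L) (p := 1)
    (by fun_prop) fun c _ u => by
      simp only [L, Prod.smul_fst, Prod.smul_snd, Pi.smul_apply, Matrix.mulVec_smul, pow_one,
        smul_add, smul_sum]
  obtain ⟨Mq, hMq⟩ := exists_norm_le_mul_norm_pow_of_homogeneous
    (g := fun u s => q s u) (p := t) (continuous_pi hqcont)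
    fun c hc u => funext fun s => hqhom s c hc u
  obtain ⟨R, hR, hRbig⟩ := exists_forall_add_lt_mul_pow (Fintype.card (Fin n) * ML)
    (Fintype.card (Fin n) * Mq) hq0 (p₁ := 1 + 1) (p₂ := t + 1) (k := r + 1) (by omega) (by omega)
  refine ⟨R, hR, fun x y hx hy => ?_⟩
  have hxy : ‖(x, y)‖ = ‖x‖ :=
    max_eq_left ((pi_norm_le_iff_of_nonneg (norm_nonneg x)).mpr hy)
  have hxy0 : (x, y) ≠ 0 := by rw [← norm_pos_iff, hxy]; linarith
  have hsplit : ∑ i, x i * f x y i = ∑ i, x i * L (x, y) i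
      + ∑ i, x i ^ (r + 1) * Q i (x, y) + ∑ i, x i * q i (x, y) := by
    simp only [hf, L, ← sum_add_distrib]
    exact sum_congr rfl fun i _ => by ring
  have hlin := abs_sum_mul_le_of_norm_le (hxy ▸ hML _ hxy0)
  have hq := abs_sum_mul_le_of_norm_le (hxy ▸ hMq _ hxy0)
  have hdom := mul_norm_pow_le_sum_pow_mul hrodd.add_one hq0.le x (Q · (x, y))
    fun i => hQpos i _
  rw [hsplit]
  linarith [hRbig ‖x‖ hx, neg_abs_le (∑ i, x i * L (x, y) i),
    neg_abs_le (∑ i, x i * q i (x, y))]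

/-- Growth condition (A3) for the polynomial class of
Section 5.2(a): with `V = ℝⁿ` carrying the max norm (the sup norm on
`Fin n → ℝ`), odd integers `r ≥ 5` and `3 ≤ t < r`, continuous `Q_s ≥ q₀ > 0`,
continuous `q_s` positively homogeneous of degree `t`, real matrices
`A₀, …, A_{m−1}`, and
`f_s(x, 𝐲) = (A₀x + Σ_j A_j yʲ)_s + x_sʳ·Q_s(x,𝐲) + q_s(x,𝐲)`,
there exists `R > 0` such that `|x| > R` and `|yʲ| ≤ |x|` for all `j` imply
`x • f(x, y¹, …, y^{m−1}) > 0` (Euclidean inner product). -/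
theorem stmt11 (n m : ℕ) (hn : 0 < n) (hm : 0 < m)
    (r t : ℕ) (hr5 : 5 ≤ r) (hrodd : Odd r) (ht3 : 3 ≤ t) (htr : t < r)
    (htodd : Odd t) (q0 : ℝ) (hq0 : 0 < q0)
    (Q q : Fin n → ((Fin n → ℝ) × (Fin (m - 1) → Fin n → ℝ)) → ℝ)
    (hQcont : ∀ s : Fin n, Continuous (Q s))
    (hQpos : ∀ (s : Fin n) (u : (Fin n → ℝ) × (Fin (m - 1) → Fin n → ℝ)),
      q0 ≤ Q s u)
    (hqcont : ∀ s : Fin n, Continuous (q s))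
    (hqhom : ∀ (s : Fin n) (c : ℝ), 0 < c →
      ∀ u : (Fin n → ℝ) × (Fin (m - 1) → Fin n → ℝ),
        q s (c • u) = c ^ t * q s u)
    (A0 : Matrix (Fin n) (Fin n) ℝ) (A : Fin (m - 1) → Matrix (Fin n) (Fin n) ℝ)
    (f : (Fin n → ℝ) → (Fin (m - 1) → Fin n → ℝ) → (Fin n → ℝ))
    (hf : ∀ (x : Fin n → ℝ) (y : Fin (m - 1) → Fin n → ℝ) (s : Fin n),
      f x y s = (A0.mulVec x + ∑ j : Fin (m - 1), (A j).mulVec (y j)) s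
        + (x s) ^ r * Q s (x, y) + q s (x, y)) :
    ∃ R > (0 : ℝ), ∀ (x : Fin n → ℝ) (y : Fin (m - 1) → Fin n → ℝ),
      R < ‖x‖ → (∀ j : Fin (m - 1), ‖y j‖ ≤ ‖x‖) →
      0 < ∑ i : Fin n, x i * f x y i :=
  stmt11_general n m hn r t hr5 hrodd htr q0 hq0 Q q hQpos hqcont hqhom A0 A f hf
end
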